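/- Let a, b > 0 with a + b = 1, and let A, B be bounded measurable subsets of ℝⁿ. Then vol(A)^a · vol(B)^b ≤ vol(a·A + b·B), where a·A + b·B = {a·x + b·y : x ∈ A, y ∈ B} and vol denotes Lebesgue measure (assuming the Minkowski combination is measurable). -/

import Mathlib

open MeasureTheory Bornology Pointwise
open Set
open scoped ENNReal NNReal

/-!
Induction on the dimension through the one-dimensional Prékopa–Leindler inequality. For compact
`K, L ⊆ ℝ × F`, Fubini writes the three volumes as integrals of the section measures
`f r = μ (K_r)`, `g s = μ (L_s)`, `h t = μ ((a • K + b • L)_t)`, and the inequality in `F` applied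
to the sections gives `f r ^ a * g s ^ b ≤ h (a r + b s)`.

Prékopa–Leindler on `ℝ` reduces, after rescaling, to `sup f = sup g = 1`. Then for every level
`τ < 1` the superlevel sets are nonempty and `a • {f > τ} + b • {g > τ} ⊆ {h > τ}`, so the additive
Brunn–Minkowski inequality on the line (two translates of compact sets meeting in a single point)
and the layer-cake formula give `a ∫ f + b ∫ g ≤ ∫ h`; weighted AM–GM finishes. Measurable sets
are reached from compact ones by inner regularity.
-/

theorem ENNReal.geom_mean_le_arith_mean2_weighted {a b : ℝ} (ha : 0 < a) (hb : 0 < b)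
    (hab : a + b = 1) (x y : ℝ≥0∞) :
    x ^ a * y ^ b ≤ ENNReal.ofReal a * x + ENNReal.ofReal b * y := by
  rcases eq_or_ne x ⊤ with rfl | hx
  · rcases eq_or_ne y 0 with rfl | hy
    · simp [ENNReal.zero_rpow_of_pos hb]
    · simp [ENNReal.mul_top, ha]
  rcases eq_or_ne y ⊤ with rfl | hy
  · rcases eq_or_ne x 0 with rfl | hx0
    · simp [ENNReal.zero_rpow_of_pos ha]
    · simp [ENNReal.mul_top, hb]
  lift x to ℝ≥0 using hx
  lift y to ℝ≥0 using hy
  have key := NNReal.geom_mean_le_arith_mean2_weighted a.toNNReal b.toNNReal x y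
    (by rw [← Real.toNNReal_add ha.le hb.le, hab, Real.toNNReal_one])
  rw [Real.coe_toNNReal _ ha.le, Real.coe_toNNReal _ hb.le] at key
  rw [← ENNReal.coe_rpow_of_nonneg x ha.le, ← ENNReal.coe_rpow_of_nonneg y hb.le, ENNReal.ofReal,
    ENNReal.ofReal]
  exact_mod_cast key

theorem Real.volume_restrict_Ioi_setOf_ofReal_lt (y : ℝ≥0∞) :
    volume.restrict (Ioi (0 : ℝ)) {t | ENNReal.ofReal t < y} = y := by
  rw [Measure.restrict_apply' measurableSet_Ioi]
  rcases eq_or_ne y ⊤ with rfl | hy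
  · simp
  · have : {t : ℝ | ENNReal.ofReal t < y} ∩ Ioi 0 = Ioo 0 y.toReal := by
      ext t
      simp only [mem_inter_iff, mem_ofPred_eq, mem_Ioi, mem_Ioo]
      constructor
      · rintro ⟨h, ht⟩
        exact ⟨ht, (ENNReal.ofReal_lt_iff_lt_toReal ht.le hy).1 h⟩
      · rintro ⟨ht, h⟩
        exact ⟨(ENNReal.ofReal_lt_iff_lt_toReal ht.le hy).2 h, ht⟩
    rw [this, Real.volume_Ioo, sub_zero, ENNReal.ofReal_toReal hy]

theorem MeasureTheory.lintegral_eq_lintegral_meas_ofReal_lt {α : Type*} [MeasurableSpace α]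
    (μ : Measure α) [SFinite μ] {f : α → ℝ≥0∞} (hf : Measurable f) :
    ∫⁻ x, f x ∂μ = ∫⁻ t in Ioi (0 : ℝ), μ {x | ENNReal.ofReal t < f x} := by
  have hE : MeasurableSet {p : α × ℝ | ENNReal.ofReal p.2 < f p.1} :=
    measurableSet_lt (ENNReal.measurable_ofReal.comp measurable_snd) (hf.comp measurable_fst)
  calc ∫⁻ x, f x ∂μ
      = ∫⁻ x, volume.restrict (Ioi (0 : ℝ)) {t | ENNReal.ofReal t < f x} ∂μ := by
        simp only [Real.volume_restrict_Ioi_setOf_ofReal_lt]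
    _ = (μ.prod (volume.restrict (Ioi 0))) {p | ENNReal.ofReal p.2 < f p.1} :=
        (Measure.prod_apply hE).symm
    _ = ∫⁻ t in Ioi (0 : ℝ), μ {x | ENNReal.ofReal t < f x} := Measure.prod_apply_symm hE

theorem Real.volume_add_volume_le_volume_add_of_isCompact {S T : Set ℝ} (hS : IsCompact S)
    (hT : IsCompact T) (hSne : S.Nonempty) (hTne : T.Nonempty) :
    volume S + volume T ≤ volume (S + T) := by
  obtain ⟨x, hxS, hx⟩ := hS.exists_isGreatest hSne
  obtain ⟨y, hyT, hy⟩ := hT.exists_isLeast hTne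
  -- `S + y` and `x + T` lie in `S + T` and meet only at `x + y`.
  have h_inter : (· + y) '' S ∩ (x + ·) '' T ⊆ {x + y} := by
    rintro _ ⟨⟨s, hs, rfl⟩, ⟨t, ht, hts⟩⟩
    have : s = x := by linarith [hx hs, hy ht]
    simp [this]
  calc volume S + volume T = volume ((· + y) '' S) + volume ((x + ·) '' T) := by
        simp only [image_add_right, image_add_left, measure_preimage_add_right,
          measure_preimage_add]
    _ = volume ((· + y) '' S ∪ (x + ·) '' T) := by
        rw [← measure_union_add_inter _ ((hT.image (continuous_const_add x)).measurableSet),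
          measure_mono_null h_inter (measure_singleton _), add_zero]
    _ ≤ volume (S + T) := by
        refine measure_mono (union_subset ?_ ?_)
        · rintro _ ⟨s, hs, rfl⟩; exact add_mem_add hs hyT
        · rintro _ ⟨t, ht, rfl⟩; exact add_mem_add hxS ht

theorem Real.volume_add_volume_le_volume_add {S T : Set ℝ} (hS : MeasurableSet S)
    (hT : MeasurableSet T) (hSne : S.Nonempty) (hTne : T.Nonempty) :
    volume S + volume T ≤ volume (S + T) := by
  obtain ⟨x, hx⟩ := hSne
  obtain ⟨y, hy⟩ := hTne
  rw [hS.measure_eq_iSup_isCompact, hT.measure_eq_iSup_isCompact]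
  simp only [iSup_and']
  refine ENNReal.biSup_add_biSup_le' ⟨∅, empty_subset _, isCompact_empty⟩
    ⟨∅, empty_subset _, isCompact_empty⟩ fun K ⟨hKS, hK⟩ L ⟨hLT, hL⟩ => ?_
  calc volume K + volume L ≤ volume (insert x K) + volume (insert y L) := by
        gcongr <;> exact subset_insert _ _
    _ ≤ volume (insert x K + insert y L) :=
        volume_add_volume_le_volume_add_of_isCompact (hK.insert x) (hL.insert y)
          (insert_nonempty _ _) (insert_nonempty _ _)
    _ ≤ volume (S + T) :=
        measure_mono (add_subset_add (insert_subset hx hKS) (insert_subset hy hLT))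

theorem smul_setOf_lt_add_smul_setOf_lt_subset {E : Type*} [Add E] [SMul ℝ E] {a b : ℝ}
    (ha : 0 < a) (hb : 0 < b) (hab : a + b = 1) {f g h : E → ℝ≥0∞}
    (hfgh : ∀ x y, f x ^ a * g y ^ b ≤ h (a • x + b • y)) (τ : ℝ≥0∞) :
    a • {x | τ < f x} + b • {y | τ < g y} ⊆ {z | τ < h z} := by
  rintro _ ⟨_, ⟨x, hx, rfl⟩, _, ⟨y, hy, rfl⟩, rfl⟩
  calc τ = τ ^ a * τ ^ b := by
        rw [← ENNReal.rpow_add_of_nonneg _ _ ha.le hb.le, hab, ENNReal.rpow_one]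
    _ < f x ^ a * g y ^ b :=
        ENNReal.mul_lt_mul (ENNReal.rpow_lt_rpow hx ha) (ENNReal.rpow_lt_rpow hy hb)
    _ ≤ h (a • x + b • y) := hfgh x y

theorem Real.prekopa_leindler_of_iSup_eq_one {a b : ℝ} (ha : 0 < a) (hb : 0 < b)
    (hab : a + b = 1) {f g h : ℝ → ℝ≥0∞} (hf : Measurable f) (hg : Measurable g)
    (hh : Measurable h) (hf1 : ⨆ x, f x = 1) (hg1 : ⨆ y, g y = 1)
    (hfgh : ∀ x y, f x ^ a * g y ^ b ≤ h (a * x + b * y)) :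
    ENNReal.ofReal a * (∫⁻ x, f x) + ENNReal.ofReal b * ∫⁻ y, g y ≤ ∫⁻ z, h z := by
  have level : ∀ τ : ℝ≥0∞, ENNReal.ofReal a * volume {x | τ < f x} +
      ENNReal.ofReal b * volume {y | τ < g y} ≤ volume {z | τ < h z} := by
    intro τ
    rcases lt_or_ge τ 1 with hτ | hτ
    · have hS : {x | τ < f x}.Nonempty := lt_iSup_iff.1 (hf1 ▸ hτ : τ < ⨆ x, f x)
      have hT : {y | τ < g y}.Nonempty := lt_iSup_iff.1 (hg1 ▸ hτ : τ < ⨆ y, g y)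
      have hSm : MeasurableSet {x | τ < f x} := measurableSet_lt measurable_const hf
      have hTm : MeasurableSet {y | τ < g y} := measurableSet_lt measurable_const hg
      calc ENNReal.ofReal a * volume {x | τ < f x} + ENNReal.ofReal b * volume {y | τ < g y}
          = volume (a • {x | τ < f x}) + volume (b • {y | τ < g y}) := by
            simp only [Measure.addHaar_smul, Module.finrank_self, pow_one, abs_of_pos ha,
              abs_of_pos hb]
        _ ≤ volume (a • {x | τ < f x} + b • {y | τ < g y}) :=
            Real.volume_add_volume_le_volume_add (hSm.const_smul_of_ne_zero ha.ne')
              (hTm.const_smul_of_ne_zero hb.ne') hS.smul_set hT.smul_set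
        _ ≤ volume {z | τ < h z} :=
            measure_mono (smul_setOf_lt_add_smul_setOf_lt_subset ha hb hab hfgh τ)
    · have hS : {x | τ < f x} = ∅ :=
        eq_empty_of_forall_notMem fun x hx => hx.not_ge ((le_iSup f x).trans (hf1 ▸ hτ))
      have hT : {y | τ < g y} = ∅ :=
        eq_empty_of_forall_notMem fun y hy => hy.not_ge ((le_iSup g y).trans (hg1 ▸ hτ))
      simp [hS, hT]
  calc ENNReal.ofReal a * (∫⁻ x, f x) + ENNReal.ofReal b * ∫⁻ y, g y
      = ENNReal.ofReal a * (∫⁻ t in Ioi (0 : ℝ), volume {x | ENNReal.ofReal t < f x}) +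
          ENNReal.ofReal b * ∫⁻ t in Ioi (0 : ℝ), volume {y | ENNReal.ofReal t < g y} := by
        rw [lintegral_eq_lintegral_meas_ofReal_lt volume hf,
          lintegral_eq_lintegral_meas_ofReal_lt volume hg]
    _ ≤ ∫⁻ t in Ioi (0 : ℝ), (ENNReal.ofReal a * volume {x | ENNReal.ofReal t < f x} +
          ENNReal.ofReal b * volume {y | ENNReal.ofReal t < g y}) :=
        (add_le_add (lintegral_const_mul_le _ _) (lintegral_const_mul_le _ _)).trans
          (le_lintegral_add _ _)
    _ ≤ ∫⁻ t in Ioi (0 : ℝ), volume {z | ENNReal.ofReal t < h z} :=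
        lintegral_mono fun t => level _
    _ = ∫⁻ z, h z := (lintegral_eq_lintegral_meas_ofReal_lt volume hh).symm

theorem Real.prekopa_leindler {a b : ℝ} (ha : 0 < a) (hb : 0 < b) (hab : a + b = 1)
    {f g h : ℝ → ℝ≥0∞} (hf : Measurable f) (hg : Measurable g) (hh : Measurable h)
    (hf_top : ⨆ x, f x ≠ ∞) (hg_top : ⨆ y, g y ≠ ∞)
    (hfgh : ∀ x y, f x ^ a * g y ^ b ≤ h (a * x + b * y)) :
    (∫⁻ x, f x) ^ a * (∫⁻ y, g y) ^ b ≤ ∫⁻ z, h z := by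
  set M := ⨆ x, f x
  set N := ⨆ y, g y
  rcases eq_or_ne M 0 with hM | hM
  · simp [ENNReal.iSup_eq_zero.1 hM, ENNReal.zero_rpow_of_pos ha]
  rcases eq_or_ne N 0 with hN | hN
  · simp [ENNReal.iSup_eq_zero.1 hN, ENNReal.zero_rpow_of_pos hb]
  set c := M ^ a * N ^ b
  have hMa : M ^ a ≠ 0 := by simp [hM, hf_top, ha]
  have hMa_top : M ^ a ≠ ∞ := by simp [hM, hf_top]
  have hc : c ≠ 0 := mul_ne_zero hMa (by simp [hN, hg_top, hb])
  have hc_top : c ≠ ∞ := ENNReal.mul_ne_top hMa_top (by simp [hN, hg_top])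
  have rescale : ∀ u v : ℝ≥0∞, (u * M⁻¹) ^ a * (v * N⁻¹) ^ b = u ^ a * v ^ b * c⁻¹ := by
    intro u v
    rw [ENNReal.mul_rpow_of_nonneg _ _ ha.le, ENNReal.mul_rpow_of_nonneg _ _ hb.le,
      ENNReal.inv_rpow, ENNReal.inv_rpow, ENNReal.mul_inv (.inl hMa) (.inl hMa_top)]
    ring
  have normalized := prekopa_leindler_of_iSup_eq_one ha hb hab (hf.mul_const M⁻¹)
    (hg.mul_const N⁻¹) (hh.mul_const c⁻¹)
    (by rw [← ENNReal.iSup_mul, ENNReal.mul_inv_cancel hM hf_top])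
    (by rw [← ENNReal.iSup_mul, ENNReal.mul_inv_cancel hN hg_top])
    (fun x y => by rw [rescale]; gcongr; exact hfgh x y)
  calc (∫⁻ x, f x) ^ a * (∫⁻ y, g y) ^ b
      = ((∫⁻ x, f x) * M⁻¹) ^ a * ((∫⁻ y, g y) * N⁻¹) ^ b * c := by
        rw [rescale, ← div_eq_mul_inv, ENNReal.div_mul_cancel hc hc_top]
    _ ≤ (ENNReal.ofReal a * ((∫⁻ x, f x) * M⁻¹) + ENNReal.ofReal b * ((∫⁻ y, g y) * N⁻¹)) * c := by
        gcongr; exact ENNReal.geom_mean_le_arith_mean2_weighted ha hb hab _ _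
    _ ≤ (∫⁻ z, h z * c⁻¹) * c := by
        rw [← lintegral_mul_const _ hf, ← lintegral_mul_const _ hg]; gcongr
    _ = ∫⁻ z, h z := by
        rw [lintegral_mul_const _ hh, ← div_eq_mul_inv, ENNReal.div_mul_cancel hc hc_top]

theorem IsCompact.preimage_prodMk {X Y : Type*} [TopologicalSpace X] [TopologicalSpace Y]
    [T2Space (X × Y)] {K : Set (X × Y)} (hK : IsCompact K) (x : X) :
    IsCompact (Prod.mk x ⁻¹' K) :=
  (hK.image continuous_snd).of_isClosed_subset (hK.isClosed.preimage (Continuous.prodMk_right x))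
    fun y hy => ⟨(x, y), hy, rfl⟩

theorem MeasurableSet.exists_lt_isCompact_rpow {α : Type*} [MeasurableSpace α]
    [TopologicalSpace α] {μ : Measure α} [μ.InnerRegular] {A : Set α} (hA : MeasurableSet A)
    {p : ℝ} (hp : 0 < p) {r : ℝ≥0∞} (hr : r < μ A ^ p) :
    ∃ K ⊆ A, IsCompact K ∧ r < μ K ^ p := by
  rw [← ENNReal.rpow_inv_rpow hp.ne' r, ENNReal.rpow_lt_rpow_iff hp] at hr
  obtain ⟨K, hKA, hK, hrK⟩ := hA.exists_lt_isCompact hr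
  exact ⟨K, hKA, hK, ENNReal.rpow_inv_rpow hp.ne' r ▸ ENNReal.rpow_lt_rpow hrK hp⟩

def BrunnMinkowskiOnCompacts {E : Type*} [Add E] [SMul ℝ E] [TopologicalSpace E]
    [MeasurableSpace E] (μ : Measure E) : Prop :=
  ∀ ⦃a b : ℝ⦄, 0 < a → 0 < b → a + b = 1 → ∀ ⦃K L : Set E⦄, IsCompact K → IsCompact L →
    μ K ^ a * μ L ^ b ≤ μ (a • K + b • L)

namespace BrunnMinkowskiOnCompacts

variable {E F : Type*} [AddCommGroup E] [Module ℝ E] [TopologicalSpace E] [MeasurableSpace E]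
  [AddCommGroup F] [Module ℝ F] [TopologicalSpace F] [MeasurableSpace F]

theorem of_measurePreserving [ContinuousAdd E] [ContinuousConstSMul ℝ E] [T2Space F]
    [OpensMeasurableSpace F] {μ : Measure E} {ν : Measure F} (hν : BrunnMinkowskiOnCompacts ν)
    (e : E →L[ℝ] F) (he : MeasurePreserving e μ ν) (he_inj : Function.Injective e) :
    BrunnMinkowskiOnCompacts μ := by
  intro a b ha hb hab K L hK hL
  have measure_eq : ∀ {S : Set E}, IsCompact S → μ S = ν (e '' S) := fun hS => by
    rw [← he.measure_preimage (hS.image e.continuous).measurableSet.nullMeasurableSet,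
      he_inj.preimage_image]
  rw [measure_eq hK, measure_eq hL, measure_eq ((hK.smul a).add (hL.smul b)), image_add,
    image_smul_set, image_smul_set]
  exact hν ha hb hab (hK.image e.continuous) (hL.image e.continuous)

theorem prod [T2Space F] [ContinuousAdd F] [ContinuousConstSMul ℝ F] [OpensMeasurableSpace F]
    {μ : Measure F} [SFinite μ] [IsFiniteMeasureOnCompacts μ] (hμ : BrunnMinkowskiOnCompacts μ) :
    BrunnMinkowskiOnCompacts ((volume : Measure ℝ).prod μ) := by
  intro a b ha hb hab K L hK hL
  have hC : IsCompact (a • K + b • L) := (hK.smul a).add (hL.smul b)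
  have bdd : ∀ {S : Set (ℝ × F)}, IsCompact S → ⨆ r, μ (Prod.mk r ⁻¹' S) ≠ ∞ := fun hS =>
    ne_top_of_le_ne_top (hS.image continuous_snd).measure_ne_top
      (iSup_le fun r => measure_mono fun y hy => ⟨(r, y), hy, rfl⟩)
  rw [Measure.prod_apply hK.measurableSet, Measure.prod_apply hL.measurableSet,
    Measure.prod_apply hC.measurableSet]
  refine Real.prekopa_leindler ha hb hab (measurable_measure_prodMk_left hK.measurableSet)
    (measurable_measure_prodMk_left hL.measurableSet)
    (measurable_measure_prodMk_left hC.measurableSet) (bdd hK) (bdd hL) fun r s => ?_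
  calc μ (Prod.mk r ⁻¹' K) ^ a * μ (Prod.mk s ⁻¹' L) ^ b
      ≤ μ (a • Prod.mk r ⁻¹' K + b • Prod.mk s ⁻¹' L) :=
        hμ ha hb hab (hK.preimage_prodMk r) (hL.preimage_prodMk s)
    _ ≤ μ (Prod.mk (a * r + b * s) ⁻¹' (a • K + b • L)) := by
        refine measure_mono ?_
        rintro _ ⟨_, ⟨x, hx, rfl⟩, _, ⟨y, hy, rfl⟩, rfl⟩
        exact add_mem_add (smul_mem_smul_set (a := a) (b := (r, x)) hx)
          (smul_mem_smul_set (a := b) (b := (s, y)) hy)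

theorem measure_rpow_mul_measure_rpow_le {μ : Measure E} [μ.InnerRegular]
    (hμ : BrunnMinkowskiOnCompacts μ) {a b : ℝ} (ha : 0 < a) (hb : 0 < b) (hab : a + b = 1)
    {A B : Set E} (hA : MeasurableSet A) (hB : MeasurableSet B) :
    μ A ^ a * μ B ^ b ≤ μ (a • A + b • B) := by
  refine ENNReal.mul_le_of_forall_lt fun x hx y hy => ?_
  obtain ⟨K, hKA, hK, hxK⟩ := hA.exists_lt_isCompact_rpow ha hx
  obtain ⟨L, hLB, hL, hyL⟩ := hB.exists_lt_isCompact_rpow hb hy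
  calc x * y ≤ μ K ^ a * μ L ^ b := mul_le_mul' hxK.le hyL.le
    _ ≤ μ (a • K + b • L) := hμ ha hb hab hK hL
    _ ≤ μ (a • A + b • B) := measure_mono (add_subset_add (smul_set_mono hKA) (smul_set_mono hLB))

end BrunnMinkowskiOnCompacts

theorem brunnMinkowskiOnCompacts_volume_pi (n : ℕ) :
    BrunnMinkowskiOnCompacts (volume : Measure (Fin n → ℝ)) := by
  induction n with
  | zero =>
    intro a b ha hb hab K L hK hL
    rcases K.eq_empty_or_nonempty with rfl | hK_ne
    · simp [ENNReal.zero_rpow_of_pos ha]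
    rcases L.eq_empty_or_nonempty with rfl | hL_ne
    · simp [ENNReal.zero_rpow_of_pos hb]
    rw [(hK_ne.smul_set.add hL_ne.smul_set).eq_univ, hK_ne.eq_univ, hL_ne.eq_univ]
    simp [volume_pi]
  | succ n ih =>
    exact ih.prod.of_measurePreserving
      ((ContinuousLinearMap.proj 0).prod
        (ContinuousLinearMap.pi fun j => ContinuousLinearMap.proj (Fin.succAbove 0 j)))
      (volume_preserving_piFinSuccAbove (fun _ => ℝ) 0)
      (MeasurableEquiv.piFinSuccAbove (fun _ => ℝ) 0).injective

theorem brunnMinkowskiOnCompacts_volume_euclideanSpace (n : ℕ) :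
    BrunnMinkowskiOnCompacts (volume : Measure (EuclideanSpace ℝ (Fin n))) :=
  (brunnMinkowskiOnCompacts_volume_pi n).of_measurePreserving
    (EuclideanSpace.equiv (Fin n) ℝ).toContinuousLinearMap (PiLp.volume_preserving_ofLp _)
    (EuclideanSpace.equiv (Fin n) ℝ).injective

theorem brunn_minkowski_multiplicative_general (n : ℕ) (a b : ℝ) (ha : 0 < a) (hb : 0 < b)
    (hab : a + b = 1) (A B : Set (EuclideanSpace ℝ (Fin n)))
    (hAm : MeasurableSet A) (hBm : MeasurableSet B) :
    volume A ^ a * volume B ^ b ≤ volume (a • A + b • B) :=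
  (brunnMinkowskiOnCompacts_volume_euclideanSpace n).measure_rpow_mul_measure_rpow_le ha hb hab
    hAm hBm

theorem brunn_minkowski_multiplicative (n : ℕ) (a b : ℝ) (ha : 0 < a) (hb : 0 < b)
    (hab : a + b = 1) (A B : Set (EuclideanSpace ℝ (Fin n)))
    (hAbd : IsBounded A) (hBbd : IsBounded B)
    (hAm : MeasurableSet A) (hBm : MeasurableSet B)
    (hABm : MeasurableSet (a • A + b • B)) :
    volume A ^ a * volume B ^ b ≤ volume (a • A + b • B) :=
  brunn_minkowski_multiplicative_general n a b ha hb hab A B hAm hBm
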